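/- arXiv:hep-th/9909044 — 2 statements merged into one kernel-verified Lean document; each statement's English description precedes it below -/
import Mathlib

section
/- Define ψ(p,q,k) = E_p + E_q − E_k − E_{p+q−k} on (R^3)^3, where E_l = sqrt(|l|²+m²) with m > 0. If the gradient of ψ vanishes at a point (p,q,k), then p/E_p = q/E_q. -/
/-!
The gradient of `E m` at `l` is the velocity `l / E m l`. Differentiating `ψ` at a critical point
in the directions `(v, 0, 0)` and `(0, v, 0)` shows that `p` and `q` both have the velocity of
`p + q - k`.
-/

noncomputable def E (m : ℝ) (l : EuclideanSpace ℝ (Fin 3)) : ℝ :=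
  Real.sqrt (‖l‖ ^ 2 + m ^ 2)

noncomputable def psi (m : ℝ)
    (x : EuclideanSpace ℝ (Fin 3) × EuclideanSpace ℝ (Fin 3) × EuclideanSpace ℝ (Fin 3)) : ℝ :=
  E m x.1 + E m x.2.1 - E m x.2.2 - E m (x.1 + x.2.1 - x.2.2)

open scoped RealInnerProductSpace

theorem hasFDerivAt_sqrt_norm_sq_add_sq {F : Type*} [NormedAddCommGroup F]
    [InnerProductSpace ℝ F] {m : ℝ} (hm : m ≠ 0) (l : F) :
    HasFDerivAt (fun x : F ↦ √(‖x‖ ^ 2 + m ^ 2))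
      (innerSL ℝ ((√(‖l‖ ^ 2 + m ^ 2))⁻¹ • l)) l := by
  have hpos : 0 < ‖l‖ ^ 2 + m ^ 2 := by positivity
  convert ((hasStrictFDerivAt_norm_sq l).hasFDerivAt.add_const (m ^ 2)).sqrt hpos.ne' using 1
  ext v
  simp only [map_smul, smul_apply, innerSL_apply_apply, smul_eq_mul, nsmul_eq_mul,
    Nat.cast_ofNat]
  field_simp

section

local notation "V" => EuclideanSpace ℝ (Fin 3)

noncomputable def velocity (m : ℝ) (l : V) : V :=
  (E m l)⁻¹ • l

variable {m : ℝ}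

theorem hasFDerivAt_E (hm : m ≠ 0) (l : V) :
    HasFDerivAt (E m) (innerSL ℝ (velocity m l)) l :=
  hasFDerivAt_sqrt_norm_sq_add_sq hm l

theorem differentiable_psi (hm : m ≠ 0) : Differentiable ℝ (psi m) := by
  have hE : Differentiable ℝ (E m) := fun l ↦ (hasFDerivAt_E hm l).differentiableAt
  unfold psi
  fun_prop

theorem hasLineDerivAt_psi (hm : m ≠ 0) (x d : V × V × V) :
    HasLineDerivAt ℝ (psi m)
      (⟪velocity m x.1, d.1⟫ + ⟪velocity m x.2.1, d.2.1⟫ - ⟪velocity m x.2.2, d.2.2⟫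
        - ⟪velocity m (x.1 + x.2.1 - x.2.2), d.1 + d.2.1 - d.2.2⟫) x d := by
  have hE (l v : V) : HasLineDerivAt ℝ (E m) ⟪velocity m l, v⟫ l v :=
    (hasFDerivAt_E hm l).hasLineDerivAt v
  have hsum := (((hE x.1 d.1).add (hE x.2.1 d.2.1)).sub (hE x.2.2 d.2.2)).sub
    (hE (x.1 + x.2.1 - x.2.2) (d.1 + d.2.1 - d.2.2))
  unfold HasLineDerivAt at hsum ⊢
  convert hsum using 2 with t
  simp only [psi, Prod.fst_add, Prod.snd_add, Prod.smul_fst, Prod.smul_snd]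
  congr 2
  module

theorem velocity_eq_of_fderiv_psi_eq_zero (hm : m ≠ 0) {p q k : V}
    (hgrad : fderiv ℝ (psi m) (p, q, k) = 0) :
    velocity m p = velocity m (p + q - k) ∧ velocity m q = velocity m (p + q - k) := by
  have hzero (d : V × V × V) : HasLineDerivAt ℝ (psi m) 0 (p, q, k) d := by
    simpa [hgrad] using (differentiable_psi hm (p, q, k)).hasFDerivAt.hasLineDerivAt d
  refine ⟨ext_inner_right ℝ fun v ↦ ?_, ext_inner_right ℝ fun v ↦ ?_⟩
  · have h := (hasLineDerivAt_psi hm (p, q, k) (v, 0, 0)).unique (hzero _)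
    simp only [inner_zero_right, add_zero, sub_zero] at h
    linarith
  · have h := (hasLineDerivAt_psi hm (p, q, k) (0, v, 0)).unique (hzero _)
    simp only [inner_zero_right, zero_add, sub_zero] at h
    linarith

end

theorem stmt_5 (m : ℝ) (hm : 0 < m)
    (p q k : EuclideanSpace ℝ (Fin 3))
    (hgrad : fderiv ℝ (psi m) (p, q, k) = 0) :
    (E m p)⁻¹ • p = (E m q)⁻¹ • q := by
  obtain ⟨hp, hq⟩ := velocity_eq_of_fderiv_psi_eq_zero hm.ne' hgrad
  exact hp.trans hq.symm
end

section
/- Let f : R^3 → C be continuous and bounded, and let u : R^3 → C be integrable. Then I(t,q) := ∫ d³k [f(q+k) − f(q)] u(k) e^{−iψ'(q,k)t}, where ψ'(q,k) = q·k/E_q − |k| with E_q = sqrt(|q|²+m²), m > 0, tends to 0 as |t| → ∞ for every fixed q, provided f is continuous at q and u is a Schwartz-class (or smooth compactly supported) function. -/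
open MeasureTheory Filter RealInnerProductSpace

noncomputable section AuxRL

open Set Metric Real

variable {V : Type*} [NormedAddCommGroup V] [InnerProductSpace ℝ V]
  [FiniteDimensional ℝ V] [MeasurableSpace V] [BorelSpace V] [Nontrivial V]

local notation "e" => homeomorphUnitSphereProd V

-- polar decomposition of the integral
lemma step1 (Φ : V → ℂ) :
    ∫ k, Φ k = ∫ p : sphere (0:V) 1 × Ioi (0:ℝ), Φ (p.2.1 • p.1.1)
      ∂((volume : Measure V).toSphere.prod (Measure.volumeIoiPow (Module.finrank ℝ V - 1))) := by
  have h1 : ∫ k, Φ k = ∫ x : ({(0:V)}ᶜ : Set V), Φ x ∂((volume : Measure V).comap (↑)) := by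
    rw [integral_subtype_comap (measurableSet_singleton _).compl fun x ↦ Φ x,
      MeasureTheory.restrict_compl_singleton]
  rw [h1, ← (volume : Measure V).measurePreserving_homeomorphUnitSphereProd.integral_comp
    (Homeomorph.measurableEmbedding _) (fun p => Φ (p.2.1 • p.1.1))]
  congr 1 with x
  have hx : ‖(x:V)‖ ≠ 0 := norm_ne_zero_iff.2 x.2
  simp [smul_smul, mul_inv_cancel₀ hx]

-- integrability transfer to the product space
lemma step2 {F : V → ℂ} (hF : Integrable F (volume : Measure V)) :
    Integrable (fun p : sphere (0:V) 1 × Ioi (0:ℝ) => F (p.2.1 • p.1.1))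
      ((volume : Measure V).toSphere.prod (Measure.volumeIoiPow (Module.finrank ℝ V - 1))) := by
  rw [← (volume : Measure V).measurePreserving_homeomorphUnitSphereProd.integrable_comp_emb
    (Homeomorph.measurableEmbedding _)]
  have : ((fun p : sphere (0:V) 1 × Ioi (0:ℝ) => F (p.2.1 • p.1.1)) ∘ e)
      = fun x : ({(0:V)}ᶜ : Set V) => F x := by
    ext x
    have hx : ‖(x:V)‖ ≠ 0 := norm_ne_zero_iff.2 x.2
    simp [Function.comp, smul_smul, mul_inv_cancel₀ hx]
  rw [this]
  have hmeas : MeasurableSet ({(0:V)}ᶜ : Set V) := (measurableSet_singleton _).compl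
  have h2 : Integrable (fun x : ({(0:V)}ᶜ : Set V) => F x) ((volume : Measure V).comap Subtype.val) := by
    rw [show (fun x : ({(0:V)}ᶜ : Set V) => F x) = F ∘ Subtype.val from rfl,
      ← (MeasurableEmbedding.subtype_coe hmeas).integrable_map_iff,
      _root_.map_comap_subtype_coe hmeas]
    exact hF.restrict
  exact h2

lemma norm_exp_phase (t x : ℝ) : ‖Complex.exp (-Complex.I * t * x)‖ = 1 := by
  have h : (-Complex.I * t * x) = ((-(t * x) : ℝ) : ℂ) * Complex.I := by push_cast; ring
  rw [h, Complex.norm_exp_ofReal_mul_I]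

lemma norm_exp_phase2 (t x y : ℝ) :
    ‖Complex.exp (-Complex.I * t * (x * y))‖ = 1 := by
  have h : (-Complex.I * t * (x * y) : ℂ) = ((-(t * (x * y)) : ℝ) : ℂ) * Complex.I := by
    push_cast; ring
  rw [h, Complex.norm_exp_ofReal_mul_I]

lemma aux (a : V) (ha : ‖a‖ < 1) (F : V → ℂ) (hFc : Continuous F)
    (hFs : HasCompactSupport F) :
    Tendsto (fun t : ℝ => ∫ k, F k * Complex.exp (-Complex.I * t * ((⟪a, k⟫ - ‖k‖ : ℝ))))
      (cocompact ℝ) (nhds 0) := by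
  classical
  set n := Module.finrank ℝ V - 1 with hn
  set μS := (volume : Measure V).toSphere with hμS
  set μR := Measure.volumeIoiPow n with hμR
  set c : sphere (0:V) 1 → ℝ := fun ω => ⟪a, (ω:V)⟫ - 1 with hcdef
  have hc : ∀ ω, c ω < 0 := by
    intro ω
    have h1 : ⟪a, (ω:V)⟫ ≤ ‖a‖ * ‖(ω:V)‖ := real_inner_le_norm a _
    have h2 : ‖(ω:V)‖ = 1 := mem_sphere_zero_iff_norm.1 ω.2
    rw [h2, mul_one] at h1
    simp only [hcdef]
    linarith
  have hcont_c : Continuous c :=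
    (continuous_const.inner continuous_subtype_val).sub continuous_const
  have hF_int : Integrable F (volume : Measure V) :=
    hFc.integrable_of_hasCompactSupport hFs
  have hG : Integrable (fun p : sphere (0:V) 1 × Ioi (0:ℝ) => F (p.2.1 • p.1.1)) (μS.prod μR) :=
    step2 hF_int
  set Φ : ℝ → sphere (0:V) 1 × Ioi (0:ℝ) → ℂ :=
    fun t p => F (p.2.1 • p.1.1) * Complex.exp (-Complex.I * t * (p.2.1 * c p.1)) with hΦdef
  have hΦc : ∀ t, Continuous (Φ t) := by
    intro t
    apply Continuous.mul
    · exact hFc.comp ((continuous_subtype_val.comp continuous_snd).smul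
        (continuous_subtype_val.comp continuous_fst))
    · exact Complex.continuous_exp.comp <| by fun_prop
  have hΦint : ∀ t, Integrable (Φ t) (μS.prod μR) := by
    intro t
    refine hG.norm.mono' (hΦc t).aestronglyMeasurable (ae_of_all _ fun p => ?_)
    rw [hΦdef]
    refine le_of_eq ?_
    simp only [norm_mul, norm_exp_phase2, mul_one, norm_norm]
  -- the radial profile
  set g : sphere (0:V) 1 → ℝ → ℂ :=
    fun ω => (Ioi (0:ℝ)).indicator (fun r => (r ^ n : ℝ) • F (r • (ω:V))) with hgdef
  have hg_int : ∀ ω, Integrable (g ω) (volume : Measure ℝ) := by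
    intro ω
    have hcont : Continuous (fun r : ℝ => (r ^ n : ℝ) • F (r • (ω:V))) :=
      (continuous_pow n).smul (hFc.comp (continuous_id.smul continuous_const))
    obtain ⟨R, hR⟩ := hFs.isBounded.subset_closedBall 0
    have hsupp : HasCompactSupport (fun r : ℝ => (r ^ n : ℝ) • F (r • (ω:V))) := by
      refine HasCompactSupport.intro (isCompact_closedBall (0:ℝ) R) fun r hr => ?_
      have hrn : F (r • (ω:V)) = 0 := by
        apply image_eq_zero_of_notMem_tsupport
        intro hmem
        apply hr
        have := hR hmem
        simp only [mem_closedBall, dist_zero_right] at this ⊢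
        rwa [norm_smul, mem_sphere_zero_iff_norm.1 ω.2, mul_one] at this
      rw [hrn, smul_zero]
    exact (hcont.integrable_of_hasCompactSupport hsupp).indicator measurableSet_Ioi
  -- the inner integral is a 1D Fourier transform
  have key : ∀ (t : ℝ) (ω : sphere (0:V) 1),
      (∫ r : Ioi (0:ℝ), Φ t (ω, r) ∂μR) = FourierTransform.fourier (g ω) (t * c ω / (2 * π)) := by
    intro t ω
    have meas : Measurable fun r : Ioi (0:ℝ) => (r.1 ^ n).toNNReal :=
      (measurable_subtype_coe.pow_const _).real_toNNReal
    rw [Real.fourier_real_eq_integral_exp_smul]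
    calc ∫ r : Ioi (0:ℝ), Φ t (ω, r) ∂μR
        = ∫ r : Ioi (0:ℝ), (r.1 ^ n).toNNReal •
            (F (r.1 • (ω:V)) * Complex.exp (-Complex.I * t * (r.1 * c ω)))
            ∂(Measure.comap Subtype.val volume) := by
          rw [hμR]
          simp only [Measure.volumeIoiPow, ENNReal.ofReal]
          rw [integral_withDensity_eq_integral_smul meas]
      _ = ∫ r in Ioi (0:ℝ), (r ^ n).toNNReal •
            (F (r • (ω:V)) * Complex.exp (-Complex.I * t * (r * c ω))) := by
          exact integral_subtype_comap measurableSet_Ioi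
            (fun r : ℝ => (r ^ n).toNNReal •
              (F (r • (ω:V)) * Complex.exp (-Complex.I * t * (r * c ω))))
      _ = ∫ r : ℝ, Complex.exp (↑(-2 * π * r * (t * c ω / (2 * π))) * Complex.I) • g ω r := by
          rw [← integral_indicator measurableSet_Ioi]
          congr 1 with r
          by_cases hr : r ∈ Ioi (0:ℝ)
          · rw [indicator_of_mem hr, hgdef]
            simp only [indicator_of_mem hr]
            have hπ : (π : ℝ) ≠ 0 := Real.pi_ne_zero
            have hexp : Complex.exp (↑(-2 * π * r * (t * c ω / (2 * π))) * Complex.I)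
                = Complex.exp (-Complex.I * t * (r * c ω)) := by
              congr 1
              have : (-2 * π * r * (t * c ω / (2 * π)) : ℝ) = -(t * (r * c ω)) := by
                field_simp
              rw [this]
              push_cast
              ring
            rw [hexp, NNReal.smul_def, Real.coe_toNNReal _ (pow_nonneg (le_of_lt hr) _),
              mul_comm, ← smul_eq_mul, smul_comm]
          · simp [indicator_of_notMem hr, hgdef]
  -- pointwise limit of the inner integrals
  have hlim : ∀ ω : sphere (0:V) 1,
      Tendsto (fun t : ℝ => ∫ r : Ioi (0:ℝ), Φ t (ω, r) ∂μR) (cocompact ℝ) (nhds 0) := by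
    intro ω
    have hne : c ω / (2 * π) ≠ 0 :=
      div_ne_zero (hc ω).ne (by positivity)
    have hmap : Tendsto (fun t : ℝ => t * (c ω / (2 * π))) (cocompact ℝ) (cocompact ℝ) :=
      (Homeomorph.mulRight₀ _ hne).toCocompactMap.cocompact_tendsto'
    have := (Real.zero_at_infty_fourier (g ω)).comp hmap
    simp only [Function.comp_def] at this
    convert this using 2 with t
    rw [key t ω, mul_div_assoc]
  -- dominated convergence over the sphere
  have main : Tendsto (fun t : ℝ => ∫ ω : sphere (0:V) 1,
      (∫ r : Ioi (0:ℝ), Φ t (ω, r) ∂μR) ∂μS) (cocompact ℝ) (nhds 0) := by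
    have h0 : (0 : ℂ) = ∫ _ω : sphere (0:V) 1, (0:ℂ) ∂μS := by simp
    rw [h0]
    haveI : (cocompact ℝ).IsCountablyGenerated := by
      rw [cocompact_eq_atBot_atTop]; infer_instance
    refine tendsto_integral_filter_of_dominated_convergence
      (fun ω => ∫ r : Ioi (0:ℝ), ‖F (r.1 • (ω:V))‖ ∂μR)
      (Eventually.of_forall fun t => ((hΦc t).aestronglyMeasurable.integral_prod_right'))
      (Eventually.of_forall fun t => ae_of_all _ fun ω => ?_)
      hG.integral_norm_prod_left
      (ae_of_all _ fun ω => hlim ω)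
    calc ‖∫ r : Ioi (0:ℝ), Φ t (ω, r) ∂μR‖
        ≤ ∫ r : Ioi (0:ℝ), ‖Φ t (ω, r)‖ ∂μR := norm_integral_le_integral_norm _
      _ = ∫ r : Ioi (0:ℝ), ‖F (r.1 • (ω:V))‖ ∂μR := by
          congr 1 with r
          rw [hΦdef]
          simp only [norm_mul, norm_exp_phase2, mul_one]
  -- put everything together
  have hfun : ∀ t : ℝ, (fun p : sphere (0:V) 1 × Ioi (0:ℝ) => F (p.2.1 • p.1.1) *
      Complex.exp (-Complex.I * t * ((⟪a, p.2.1 • p.1.1⟫ - ‖p.2.1 • p.1.1‖ : ℝ)))) = Φ t := by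
    intro t
    funext p
    rw [hΦdef]
    congr 1
    congr 1
    have hr : (0:ℝ) < p.2.1 := p.2.2
    have hω : ‖(p.1:V)‖ = 1 := mem_sphere_zero_iff_norm.1 p.1.2
    have hreal : (⟪a, p.2.1 • (p.1:V)⟫ - ‖p.2.1 • (p.1:V)‖ : ℝ) = p.2.1 * c p.1 := by
      rw [real_inner_smul_right, norm_smul, hω, mul_one, Real.norm_eq_abs, abs_of_pos hr,
        hcdef]
      ring
    rw [hreal]
    push_cast
    ring
  convert main using 2 with t
  rw [step1 (fun k => F k * Complex.exp (-Complex.I * t * ((⟪a, k⟫ - ‖k‖ : ℝ)))), hfun t]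
  exact integral_prod _ (hΦint t)

end AuxRL

theorem stmt_10 (m : ℝ) (hm : 0 < m)
    (f : EuclideanSpace ℝ (Fin 3) → ℂ) (hfc : Continuous f)
    (hfb : ∃ C : ℝ, ∀ x, ‖f x‖ ≤ C)
    (u : EuclideanSpace ℝ (Fin 3) → ℂ)
    (hu : ContDiff ℝ (⊤ : ℕ∞) u) (huc : HasCompactSupport u)
    (q : EuclideanSpace ℝ (Fin 3)) :
    Tendsto (fun t : ℝ =>
        ∫ k : EuclideanSpace ℝ (Fin 3),
          (f (q + k) - f q) * u k *
            Complex.exp (-Complex.I * t * ((⟪q, k⟫ / E m q - ‖k‖ : ℝ))))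
      (cocompact ℝ) (nhds 0) := by
  have hE : 0 < E m q := Real.sqrt_pos.2 (by positivity)
  set a : EuclideanSpace ℝ (Fin 3) := (E m q)⁻¹ • q with hadef
  have hqE : ‖q‖ < E m q := by
    rw [E, show (‖q‖ : ℝ) ^ 2 + m ^ 2 = ‖q‖ ^ 2 + m ^ 2 from rfl]
    rw [show Real.sqrt (‖q‖ ^ 2 + m ^ 2) = Real.sqrt (‖q‖ ^ 2 + m ^ 2) from rfl]
    refine (Real.lt_sqrt (norm_nonneg q)).2 ?_
    nlinarith
  have ha : ‖a‖ < 1 := by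
    have : ‖a‖ = ‖q‖ / E m q := by
      rw [hadef, norm_smul, norm_inv, Real.norm_eq_abs, abs_of_pos hE, inv_mul_eq_div]
    rw [this]
    exact (div_lt_one hE).2 hqE
  have hphase : ∀ k : EuclideanSpace ℝ (Fin 3), (⟪q, k⟫ / E m q : ℝ) = ⟪a, k⟫ := by
    intro k
    rw [hadef, real_inner_smul_left, inv_mul_eq_div]
  have hFc : Continuous (fun k => (f (q + k) - f q) * u k) :=
    ((hfc.comp (continuous_const.add continuous_id)).sub continuous_const).mul hu.continuous
  have hFs : HasCompactSupport (fun k => (f (q + k) - f q) * u k) :=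
    HasCompactSupport.mul_left huc
  have h := aux a ha (fun k => (f (q + k) - f q) * u k) hFc hFs
  simpa only [← hphase] using h
end
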